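/- arXiv:2106.06429 — 4 statements merged into one kernel-verified Lean document; each statement's English description precedes it below -/
import Mathlib

section
/- The matrix identity 𝒬·𝒰 = (𝒰 − α·𝒟)·𝒬 − (𝒰 − α·𝒟)^{n+1}·B_{n+1}·B₁ᵀ holds; equivalently, with 𝒜 = −𝒬⁻¹·(𝒰 − α·𝒟)^{n+1}·B_{n+1}·B₁ᵀ, one has 𝒬⁻¹·(𝒰 − α·𝒟)·𝒬 = 𝒰 − 𝒜. -/
open Matrix

/-- The nilpotent shift matrix `𝒰`, with `(i,j)` entry `1` if `j = i+1` and `0` otherwise. -/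
noncomputable def Umat (n : ℕ) : Matrix (Fin (n+1)) (Fin (n+1)) ℝ :=
  Matrix.of fun i j => if (j : ℕ) = (i : ℕ) + 1 then 1 else 0

/-- The diagonal matrix `𝒟 = diag(0, 1, …, n)`. -/
noncomputable def Dmat (n : ℕ) : Matrix (Fin (n+1)) (Fin (n+1)) ℝ :=
  Matrix.diagonal fun i => (i : ℝ)

/-- The first standard basis vector `B₁ = e₀` of `ℝ^{n+1}`. -/
noncomputable def B1 (n : ℕ) : Fin (n+1) → ℝ := Pi.single 0 1

/-- The last standard basis vector `B_{n+1} = e_n` of `ℝ^{n+1}`. -/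
noncomputable def Blast (n : ℕ) : Fin (n+1) → ℝ := Pi.single (Fin.last n) 1

/-- The matrix `𝒬` whose `k`-th column is `(𝒰 - α·𝒟)^{n-k}·B_{n+1}`. -/
noncomputable def Qmat (n : ℕ) (α : ℝ) : Matrix (Fin (n+1)) (Fin (n+1)) ℝ :=
  Matrix.of fun i k => ((Umat n - α • Dmat n) ^ (n - (k : ℕ))).mulVec (Blast n) i

/-- The diagonal matrix `Λ(c) = diag(1, c, c², …, cⁿ)`. -/
noncomputable def Lam (n : ℕ) (c : ℝ) : Matrix (Fin (n+1)) (Fin (n+1)) ℝ :=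
  Matrix.diagonal fun i => c ^ (i : ℕ)

/-- The matrix `𝒜 = -𝒬⁻¹·(𝒰 - α·𝒟)^{n+1}·B_{n+1}·B₁ᵀ`. -/
noncomputable def Amat (n : ℕ) (α : ℝ) : Matrix (Fin (n+1)) (Fin (n+1)) ℝ :=
  -((Qmat n α)⁻¹ * (Umat n - α • Dmat n) ^ (n + 1) * Matrix.vecMulVec (Blast n) (B1 n))

lemma M_mulVec {n : ℕ} {α : ℝ} (v : Fin (n+1) → ℝ) (i : Fin (n+1)) :
    ((Umat n - α • Dmat n).mulVec v) i
      = (if h : (i:ℕ) < n then v ⟨(i:ℕ)+1, by omega⟩ else 0) - α * (i:ℕ) * v i := by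
  rw [Matrix.mulVec]
  simp only [Matrix.sub_apply, Matrix.smul_apply, Umat, Dmat, Matrix.of_apply,
    Matrix.diagonal_apply, dotProduct, sub_mul, Finset.sum_sub_distrib, smul_eq_mul]
  congr 1
  · by_cases h : (i:ℕ) < n
    · rw [dif_pos h]
      rw [Finset.sum_eq_single (⟨(i:ℕ)+1, by omega⟩ : Fin (n+1))]
      · simp
      · intro b _ hb
        rw [if_neg, zero_mul]
        intro hc
        exact hb (Fin.ext hc)
      · simp
    · rw [dif_neg h]
      apply Finset.sum_eq_zero
      intro b _
      rw [if_neg, zero_mul]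
      intro hc
      omega
  · rw [Finset.sum_eq_single i]
    · simp [mul_assoc]
    · intro b _ hb
      rw [if_neg (by exact fun hc => hb (hc ▸ rfl)), mul_zero, zero_mul]
    · simp

lemma pow_mulVec_zero {n : ℕ} {α : ℝ} (p : ℕ) (i : Fin (n+1)) (h : (i:ℕ) + p < n) :
    (((Umat n - α • Dmat n) ^ p).mulVec (Blast n)) i = 0 := by
  induction p generalizing i with
  | zero =>
    simp only [pow_zero, Matrix.one_mulVec, Blast]
    rw [Pi.single_apply, if_neg]
    intro hc; subst hc; simp [Fin.last] at h
  | succ p ih =>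
    rw [pow_succ', ← Matrix.mulVec_mulVec, M_mulVec]
    rw [dif_pos (by omega)]
    rw [ih _ (by simp; omega), ih _ (by omega)]
    ring

lemma pow_mulVec_one {n : ℕ} {α : ℝ} (p : ℕ) (i : Fin (n+1)) (h : (i:ℕ) + p = n) :
    (((Umat n - α • Dmat n) ^ p).mulVec (Blast n)) i = 1 := by
  induction p generalizing i with
  | zero =>
    simp only [pow_zero, Matrix.one_mulVec, Blast]
    rw [Pi.single_apply, if_pos]
    exact Fin.ext (by simpa using h)
  | succ p ih =>
    rw [pow_succ', ← Matrix.mulVec_mulVec, M_mulVec]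
    rw [dif_pos (by omega)]
    rw [ih _ (by simp; omega), pow_mulVec_zero _ _ (by omega)]
    ring

lemma Q_det {n : ℕ} {α : ℝ} : (Qmat n α).det = 1 := by
  rw [Matrix.det_of_lowerTriangular]
  · rw [Finset.prod_eq_one]
    intro i _
    exact pow_mulVec_one _ _ (by omega)
  · intro i j hij
    exact pow_mulVec_zero _ _ (by simp at hij ⊢; omega)

lemma Q_inv_mul {n : ℕ} {α : ℝ} : (Qmat n α)⁻¹ * Qmat n α = 1 :=
  Matrix.nonsing_inv_mul _ (by rw [Q_det]; exact isUnit_one)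

lemma hMQ {n : ℕ} {α : ℝ} (i j : Fin (n+1)) :
    ((Umat n - α • Dmat n) * Qmat n α) i j
      = ((Umat n - α • Dmat n) ^ (n - (j:ℕ) + 1)).mulVec (Blast n) i := by
  rw [Matrix.mul_apply]
  have h1 : ∀ k, Qmat n α k j = ((Umat n - α • Dmat n) ^ (n - (j:ℕ))).mulVec (Blast n) k :=
    fun _ => rfl
  simp_rw [h1]
  rw [show (∑ k, (Umat n - α • Dmat n) i k *
        ((Umat n - α • Dmat n) ^ (n - (j:ℕ))).mulVec (Blast n) k)
      = ((Umat n - α • Dmat n).mulVec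
          (((Umat n - α • Dmat n) ^ (n - (j:ℕ))).mulVec (Blast n))) i from rfl,
    Matrix.mulVec_mulVec, ← pow_succ']

lemma hV {n : ℕ} {α : ℝ} (i j : Fin (n+1)) :
    ((Umat n - α • Dmat n) ^ (n+1) * Matrix.vecMulVec (Blast n) (B1 n)) i j
      = ((Umat n - α • Dmat n) ^ (n+1)).mulVec (Blast n) i * B1 n j := by
  rw [Matrix.mul_apply]
  simp_rw [Matrix.vecMulVec_apply, ← mul_assoc, ← Finset.sum_mul]
  rfl

lemma key {n : ℕ} {α : ℝ} :
    Qmat n α * Umat n =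
      (Umat n - α • Dmat n) * Qmat n α
        - (Umat n - α • Dmat n) ^ (n + 1) * Matrix.vecMulVec (Blast n) (B1 n) := by
  ext i j
  rw [Matrix.sub_apply, hMQ, hV, Matrix.mul_apply]
  simp only [Umat, Matrix.of_apply, mul_ite, mul_one, mul_zero]
  rcases Fin.eq_zero_or_eq_succ j with h0 | ⟨k, hk⟩
  · subst h0
    rw [Finset.sum_eq_zero (fun b _ => if_neg (by simp))]
    simp [B1, Nat.sub_zero]
  · subst hk
    have hks : ((k.succ : Fin (n+1)) : ℕ) = (k:ℕ) + 1 := rfl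
    rw [Finset.sum_eq_single (Fin.castSucc k)]
    · rw [if_pos (by simp [hks])]
      have : Qmat n α i (Fin.castSucc k)
          = ((Umat n - α • Dmat n) ^ (n - (k:ℕ))).mulVec (Blast n) i := rfl
      rw [this]
      have hb1 : B1 n k.succ = 0 := by
        simp [B1, Pi.single_apply, Fin.ext_iff]
      rw [hb1, mul_zero, sub_zero]
      have hexp : n - ((k.succ : Fin (n+1)):ℕ) + 1 = n - (k:ℕ) := by
        have := k.isLt
        omega
      rw [hexp]
      rfl
    · intro b _ hb
      rw [if_neg]
      intro hc
      exact hb (Fin.ext (by simp only [hks] at hc; simp only [Fin.coe_castSucc]; omega))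
    · simp

theorem stmt_5 (n : ℕ) (α : ℝ) :
    Qmat n α * Umat n =
      (Umat n - α • Dmat n) * Qmat n α
        - (Umat n - α • Dmat n) ^ (n + 1) * Matrix.vecMulVec (Blast n) (B1 n) ∧
    (Qmat n α)⁻¹ * (Umat n - α • Dmat n) * Qmat n α = Umat n - Amat n α := by
  refine ⟨key, ?_⟩
  have hM : (Umat n - α • Dmat n) * Qmat n α
      = Qmat n α * Umat n
        + (Umat n - α • Dmat n) ^ (n + 1) * Matrix.vecMulVec (Blast n) (B1 n) := by
    rw [key, sub_add_cancel]
  rw [Matrix.mul_assoc, hM, Matrix.mul_add, ← Matrix.mul_assoc, ← Matrix.mul_assoc,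
    Q_inv_mul, Matrix.one_mul, Amat, sub_neg_eq_add]
end

section
/- Let m ∈ ℕ, let F : ℝ^m × [0, T_c) → ℝ^m be a function, and let x : [0, T_c) → ℝ^m be differentiable with x′(t) = κ(t)·F(x(t), t) for all t ∈ [0, T_c). Then for every τ ≥ 0 with ψ(τ) < T_c, the function y(τ) := x(ψ(τ)) has derivative F(y(τ), ψ(τ)) at the point τ. -/
open Real Set

theorem stmt_9 (α Tc η : ℝ) (hα : 0 < α) (hTc : 0 < Tc) (hη : η ∈ Set.Ioc (0:ℝ) 1)
    (κ ψ : ℝ → ℝ)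
    (hκ : ∀ t, κ t = η / (α * (Tc - η * t)))
    (hψ : ∀ τ, ψ τ = η⁻¹ * Tc * (1 - Real.exp (-α * τ)))
    (m : ℕ) (F : (Fin m → ℝ) → ℝ → (Fin m → ℝ))
    (x : ℝ → (Fin m → ℝ))
    (hx : ∀ t ∈ Set.Ico (0:ℝ) Tc, HasDerivAt x (κ t • F (x t) t) t) :
    ∀ τ : ℝ, 0 ≤ τ → ψ τ < Tc →
      HasDerivAt (fun σ => x (ψ σ)) (F (x (ψ τ)) (ψ τ)) τ := by
  intro τ hτ hτTc
  obtain ⟨hη0, hη1⟩ := hη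
  -- ψ τ ≥ 0
  have hexp_le : Real.exp (-α * τ) ≤ 1 := by
    apply Real.exp_le_one_iff.mpr
    nlinarith
  have hψ0 : 0 ≤ ψ τ := by
    rw [hψ]
    have : 0 ≤ 1 - Real.exp (-α * τ) := by linarith
    positivity
  -- derivative of ψ
  have hψfun : ψ = fun σ => η⁻¹ * Tc * (1 - Real.exp (-α * σ)) := funext hψ
  have hψ' : HasDerivAt ψ (η⁻¹ * Tc * (α * Real.exp (-α * τ))) τ := by
    rw [hψfun]
    have h1 : HasDerivAt (fun σ : ℝ => -α * σ) (-α) τ := by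
      simpa using (hasDerivAt_id τ).const_mul (-α)
    have h2 : HasDerivAt (fun σ : ℝ => Real.exp (-α * σ)) (Real.exp (-α * τ) * (-α)) τ :=
      h1.exp
    have h3 : HasDerivAt (fun σ : ℝ => 1 - Real.exp (-α * σ))
        (-(Real.exp (-α * τ) * (-α))) τ := by
      exact h2.const_sub 1
    have := h3.const_mul (η⁻¹ * Tc)
    refine this.congr_deriv ?_
    ring
  have hxψ := hx (ψ τ) ⟨hψ0, hτTc⟩
  have hcomp := hxψ.scomp τ hψ'
  refine hcomp.congr_deriv ?_
  rw [hκ, hψ, smul_smul]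
  have hexp_pos : 0 < Real.exp (-α * τ) := Real.exp_pos _
  have key : η⁻¹ * Tc * (α * Real.exp (-α * τ)) *
      (η / (α * (Tc - η * (η⁻¹ * Tc * (1 - Real.exp (-α * τ)))))) = 1 := by
    have hden : Tc - η * (η⁻¹ * Tc * (1 - Real.exp (-α * τ))) = Tc * Real.exp (-α * τ) := by
      field_simp
      ring
    rw [hden]
    field_simp
  rw [key, one_smul]
end

section
/- Assume η = 1, so that κ(t) = 1/(α·(T_c − t)) and φ(t) = −α⁻¹·ln(1 − t/T_c) on [0, T_c). Let β > 0 and γ ≥ 0 be real numbers, and let χ : [0, ∞) → ℝ^{n+1} satisfy ‖χ(τ)‖ ≤ γ·e^{−α·(n+1)·τ} for all τ ≥ 0. Then the function e(t) := β·Λ(κ(t))·𝒬·χ(φ(t)) tends to 0 as t → T_c from the left. -/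
open Matrix Real Set Filter

theorem stmt_16 (α Tc : ℝ) (hα : 0 < α) (hTc : 0 < Tc)
    (n : ℕ) (κ φ : ℝ → ℝ)
    (hκ : ∀ t, κ t = 1 / (α * (Tc - t)))
    (hφ : ∀ t, φ t = -α⁻¹ * Real.log (1 - t / Tc))
    (β γ : ℝ) (hβ : 0 < β) (hγ : 0 ≤ γ)
    (χ : ℝ → (Fin (n+1) → ℝ))
    (hχ : ∀ τ : ℝ, 0 ≤ τ →
      Real.sqrt (∑ i, (χ τ i) ^ 2) ≤ γ * Real.exp (-α * (n + 1) * τ))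
    (e : ℝ → (Fin (n+1) → ℝ))
    (he : ∀ t, e t = β • (Lam n (κ t)).mulVec ((Qmat n α).mulVec (χ (φ t)))) :
    Filter.Tendsto e (nhdsWithin Tc (Set.Iio Tc)) (nhds 0) := by
  rw [tendsto_pi_nhds]
  intro i
  set l := nhdsWithin Tc (Set.Iio Tc)
  set M : ℝ := ∑ k, |Qmat n α i k| with hM
  have hM0 : 0 ≤ M := Finset.sum_nonneg fun k _ => abs_nonneg _
  set m : ℕ := n + 1 - (i : ℕ) with hm
  have him : (i : ℕ) + m = n + 1 := by have := i.isLt; omega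
  have hm0 : m ≠ 0 := by have := i.isLt; omega
  set C : ℝ := β * M * γ * (α⁻¹) ^ (i : ℕ) * (Tc⁻¹) ^ (n + 1) with hC
  -- the squeezing function
  have hg : Tendsto (fun t => C * (Tc - t) ^ m) l (nhds 0) := by
    have h1 : Tendsto (fun t : ℝ => Tc - t) l (nhds 0) := by
      have h0 : Tendsto (fun t : ℝ => Tc - t) (nhds Tc) (nhds (Tc - Tc)) :=
        tendsto_const_nhds.sub tendsto_id
      simpa using h0.mono_left nhdsWithin_le_nhds
    have h2 : Tendsto (fun t : ℝ => C * (Tc - t) ^ m) l (nhds (C * 0 ^ m)) :=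
      tendsto_const_nhds.mul (h1.pow m)
    simpa [zero_pow hm0] using h2
  refine squeeze_zero_norm' ?_ hg
  have hmem : Set.Ioo (Tc / 2) Tc ∈ l := Ioo_mem_nhdsLT_of_mem (by constructor <;> linarith)
  filter_upwards [hmem] with t ht
  obtain ⟨ht0, htT⟩ := ht
  have ht0' : 0 < t := lt_trans (by linarith) ht0
  have hs : 0 < Tc - t := by linarith
  have hu : 0 < 1 - t / Tc := by
    have : t / Tc < 1 := (div_lt_one hTc).2 htT
    linarith
  have hu1 : 1 - t / Tc ≤ 1 := by
    have : 0 ≤ t / Tc := div_nonneg ht0'.le hTc.le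
    linarith
  -- φ t ≥ 0
  have hφ0 : 0 ≤ φ t := by
    rw [hφ]
    have hlog : Real.log (1 - t / Tc) ≤ 0 := Real.log_nonpos hu.le hu1
    have : 0 ≤ α⁻¹ := (inv_pos.2 hα).le
    nlinarith
  -- exp bound becomes power
  have hexp : Real.exp (-α * (n + 1) * φ t) = (1 - t / Tc) ^ (n + 1) := by
    have h1 : -α * (↑n + 1) * φ t = ((n + 1 : ℕ) : ℝ) * Real.log (1 - t / Tc) := by
      rw [hφ]; push_cast; field_simp
    rw [h1, Real.exp_nat_mul, Real.exp_log hu]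
  have hχt := hχ (φ t) hφ0
  rw [hexp] at hχt
  -- component bound for mulVec
  set w : Fin (n + 1) → ℝ := χ (φ t) with hw
  have hwk : ∀ k, |w k| ≤ Real.sqrt (∑ j, w j ^ 2) := by
    intro k
    have h1 : w k ^ 2 ≤ ∑ j, w j ^ 2 :=
      Finset.single_le_sum (fun j _ => sq_nonneg (w j)) (Finset.mem_univ k)
    calc |w k| = Real.sqrt (w k ^ 2) := (Real.sqrt_sq_eq_abs _).symm
      _ ≤ Real.sqrt (∑ j, w j ^ 2) := Real.sqrt_le_sqrt h1
  have hmv : |((Qmat n α).mulVec w) i| ≤ M * Real.sqrt (∑ j, w j ^ 2) := by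
    have h1 : |((Qmat n α).mulVec w) i| ≤ ∑ k, |Qmat n α i k * w k| := by
      rw [Matrix.mulVec, dotProduct]
      exact Finset.abs_sum_le_sum_abs _ _
    have h2 : ∑ k, |Qmat n α i k * w k| ≤ ∑ k, |Qmat n α i k| * Real.sqrt (∑ j, w j ^ 2) := by
      refine Finset.sum_le_sum fun k _ => ?_
      rw [abs_mul]
      exact mul_le_mul_of_nonneg_left (hwk k) (abs_nonneg _)
    calc |((Qmat n α).mulVec w) i| ≤ ∑ k, |Qmat n α i k * w k| := h1
      _ ≤ ∑ k, |Qmat n α i k| * Real.sqrt (∑ j, w j ^ 2) := h2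
      _ = M * Real.sqrt (∑ j, w j ^ 2) := by rw [← Finset.sum_mul]
  have hsqrt : Real.sqrt (∑ j, w j ^ 2) ≤ γ * (1 - t / Tc) ^ (n + 1) := hχt
  -- e component
  have hκt : 0 < κ t := by rw [hκ]; positivity
  have hei : e t i = β * (κ t ^ (i : ℕ) * ((Qmat n α).mulVec w) i) := by
    rw [he]
    simp only [Pi.smul_apply, smul_eq_mul, Lam, Matrix.mulVec_diagonal, hw]
  -- combine
  have hb1 : |e t i| ≤ β * κ t ^ (i : ℕ) * (M * (γ * (1 - t / Tc) ^ (n + 1))) := by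
    rw [hei, abs_mul, abs_mul, abs_of_pos hβ, abs_of_pos (pow_pos hκt _), mul_assoc]
    refine mul_le_mul_of_nonneg_left ?_ hβ.le
    refine mul_le_mul_of_nonneg_left ?_ (pow_pos hκt _).le
    calc |((Qmat n α).mulVec w) i| ≤ M * Real.sqrt (∑ j, w j ^ 2) := hmv
      _ ≤ M * (γ * (1 - t / Tc) ^ (n + 1)) := mul_le_mul_of_nonneg_left hsqrt hM0
  -- algebraic identity
  have hkey : β * κ t ^ (i : ℕ) * (M * (γ * (1 - t / Tc) ^ (n + 1))) = C * (Tc - t) ^ m := by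
    rw [hκ, hC]
    have h1 : 1 - t / Tc = (Tc - t) / Tc := by field_simp
    have h2 : (Tc - t) ^ (n + 1) = (Tc - t) ^ (i : ℕ) * (Tc - t) ^ m := by
      rw [← pow_add, him]
    have h3 : (Tc - t)⁻¹ ^ (i : ℕ) * (Tc - t) ^ (n + 1) = (Tc - t) ^ m := by
      rw [h2, ← mul_assoc, ← mul_pow, inv_mul_cancel₀ (ne_of_gt hs), one_pow, one_mul]
    rw [h1, one_div, mul_inv, div_eq_mul_inv, mul_pow, mul_pow]
    linear_combination (β * α⁻¹ ^ (i : ℕ) * M * γ * Tc⁻¹ ^ (n + 1)) * h3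
  rw [hkey] at hb1
  simpa using hb1
end

section
/- Let n ∈ ℕ, let A be an (n+1)×(n+1) real matrix, and let c > 0, r > 0, 0 ≤ α < r, L ≥ 0 be real numbers. Assume ‖exp(t·A)·x‖ ≤ c·e^{−r·(n+1)·t}·‖x‖ for all t ≥ 0 and all x ∈ ℝ^{n+1}. Let d : [0, ∞) → ℝ be continuous with |d(s)| ≤ L·e^{−α·(n+1)·s} for all s ≥ 0, let e₀ ∈ ℝ^{n+1}, and for t ≥ 0 set e(t) = exp(t·A)·e₀ + ∫₀ᵗ exp((t−s)·A)·B_{n+1}·d(s) ds. Then for all t ≥ 0, ‖e(t)‖ ≤ c·e^{−r·(n+1)·t}·‖e₀‖ + (c·L/((r−α)·(n+1)))·(e^{−α·(n+1)·t} − e^{−r·(n+1)·t}); in particular ‖e(t)‖ ≤ γ·e^{−α·(n+1)·t} with γ = c·‖e₀‖ + c·L/((r−α)·(n+1)). -/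
open Real Matrix

/-- The Euclidean norm on `ℝ^{n+1}`. -/
noncomputable def eucNorm {m : ℕ} (v : Fin m → ℝ) : ℝ := Real.sqrt (∑ i, (v i) ^ 2)

lemma eucNorm_eq {m : ℕ} (v : Fin m → ℝ) :
    eucNorm v = ‖(EuclideanSpace.equiv (Fin m) ℝ).symm v‖ := by
  simp [eucNorm, EuclideanSpace.norm_eq, sq_abs]

lemma eucNorm_nonneg' {m : ℕ} (v : Fin m → ℝ) : 0 ≤ eucNorm v := Real.sqrt_nonneg _

lemma eucNorm_smul {m : ℕ} (a : ℝ) (v : Fin m → ℝ) : eucNorm (a • v) = |a| * eucNorm v := by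
  rw [eucNorm_eq, eucNorm_eq, _root_.map_smul, norm_smul, Real.norm_eq_abs]

lemma eucNorm_add_le {m : ℕ} (u v : Fin m → ℝ) : eucNorm (u + v) ≤ eucNorm u + eucNorm v := by
  rw [eucNorm_eq, eucNorm_eq, eucNorm_eq, map_add]; exact norm_add_le _ _

lemma eucNorm_Blast (n : ℕ) : eucNorm (Blast n) = 1 := by
  simp [eucNorm, Blast, Pi.single_apply]

lemma exp_int_aux (b t : ℝ) (hb : b ≠ 0) :
    (∫ s in (0:ℝ)..t, Real.exp (b * s)) = (Real.exp (b * t) - 1) / b := by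
  rw [intervalIntegral.integral_comp_mul_left (fun x => Real.exp x) hb]
  simp [integral_exp, mul_comm b t]
  ring


section
attribute [local instance] Matrix.linftyOpNormedAddCommGroup Matrix.linftyOpNormedRing
  Matrix.linftyOpNormedAlgebra

lemma exp_cont_aux {N : ℕ} (A : Matrix (Fin N) (Fin N) ℝ) (t : ℝ) :
    Continuous fun s : ℝ => NormedSpace.exp ((t - s) • A) :=
  NormedSpace.exp_continuous.comp ((continuous_const.sub continuous_id).smul continuous_const)

end

set_option maxHeartbeats 2000000 in
theorem stmt_18 (n : ℕ) (A : Matrix (Fin (n+1)) (Fin (n+1)) ℝ)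
    (c r α L : ℝ) (hc : 0 < c) (hr : 0 < r) (hα0 : 0 ≤ α) (hαr : α < r) (hL : 0 ≤ L)
    (hA : ∀ t : ℝ, 0 ≤ t → ∀ x : Fin (n+1) → ℝ,
      eucNorm ((NormedSpace.exp (t • A)).mulVec x) ≤ c * Real.exp (-r * (n + 1) * t) * eucNorm x)
    (d : ℝ → ℝ) (hdcont : ContinuousOn d (Set.Ici 0))
    (hd : ∀ s : ℝ, 0 ≤ s → |d s| ≤ L * Real.exp (-α * (n + 1) * s))
    (e₀ : Fin (n+1) → ℝ)
    (e : ℝ → (Fin (n+1) → ℝ))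
    (he : ∀ t : ℝ, 0 ≤ t →
      e t = (NormedSpace.exp (t • A)).mulVec e₀
        + ∫ s in (0:ℝ)..t, (NormedSpace.exp ((t - s) • A)).mulVec (d s • Blast n)) :
    ∀ t : ℝ, 0 ≤ t →
      eucNorm (e t) ≤ c * Real.exp (-r * (n + 1) * t) * eucNorm e₀
          + c * L / ((r - α) * (n + 1))
            * (Real.exp (-α * (n + 1) * t) - Real.exp (-r * (n + 1) * t)) ∧
      eucNorm (e t) ≤ (c * eucNorm e₀ + c * L / ((r - α) * (n + 1)))
          * Real.exp (-α * (n + 1) * t) := by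
  intro t ht
  have hk : (0:ℝ) < (n:ℝ) + 1 := by positivity
  set k : ℝ := (n:ℝ) + 1 with hkdef
  have hβ : (0:ℝ) < (r - α) * k := mul_pos (sub_pos.2 hαr) hk
  set g : ℝ → (Fin (n+1) → ℝ) :=
    fun s => (NormedSpace.exp ((t - s) • A)).mulVec (d s • Blast n) with hgdef
  -- continuity of the integrand
  have hgcont : ContinuousOn g (Set.uIcc 0 t) := by
    rw [Set.uIcc_of_le ht]
    have hM : Continuous fun s : ℝ => NormedSpace.exp ((t - s) • A) := exp_cont_aux A t
    have hw : ContinuousOn (fun s : ℝ => d s • Blast n) (Set.Icc 0 t) :=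
      (hdcont.mono (fun x hx => hx.1)).smul continuousOn_const
    exact (Continuous.matrix_mulVec continuous_fst continuous_snd).comp_continuousOn
      (ContinuousOn.prodMk hM.continuousOn hw)
  have hgint : IntervalIntegrable g MeasureTheory.volume 0 t := hgcont.intervalIntegrable
  set ε : (Fin (n+1) → ℝ) →L[ℝ] EuclideanSpace ℝ (Fin (n+1)) :=
    (EuclideanSpace.equiv (Fin (n+1)) ℝ).symm.toContinuousLinearMap with hεdef
  have hε : ∀ v : Fin (n+1) → ℝ, eucNorm v = ‖ε v‖ := fun v => eucNorm_eq v
  -- pointwise bound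
  have hpt : ∀ s ∈ Set.Icc (0:ℝ) t,
      eucNorm (g s) ≤ c * L * Real.exp (-r * k * t) * Real.exp ((r - α) * k * s) := by
    intro s hs
    have hts : 0 ≤ t - s := sub_nonneg.2 hs.2
    have h1 := hA (t - s) hts (d s • Blast n)
    rw [eucNorm_smul, eucNorm_Blast, mul_one] at h1
    have h2 : |d s| ≤ L * Real.exp (-α * k * s) := hd s hs.1
    have hE : Real.exp (-r * k * (t - s)) * Real.exp (-α * k * s)
        = Real.exp (-r * k * t) * Real.exp ((r - α) * k * s) := by
      rw [← Real.exp_add, ← Real.exp_add]; congr 1; ring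
    calc eucNorm (g s) ≤ c * Real.exp (-r * k * (t - s)) * |d s| := h1
      _ ≤ c * Real.exp (-r * k * (t - s)) * (L * Real.exp (-α * k * s)) :=
          mul_le_mul_of_nonneg_left h2 (by positivity)
      _ = c * L * (Real.exp (-r * k * (t - s)) * Real.exp (-α * k * s)) := by ring
      _ = c * L * (Real.exp (-r * k * t) * Real.exp ((r - α) * k * s)) := by rw [hE]
      _ = c * L * Real.exp (-r * k * t) * Real.exp ((r - α) * k * s) := by ring
  -- norm of integral
  have hint1 : eucNorm (∫ s in (0:ℝ)..t, g s) ≤ ∫ s in (0:ℝ)..t, eucNorm (g s) := by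
    rw [hε, ← ContinuousLinearMap.intervalIntegral_comp_comm ε hgint]
    calc ‖∫ s in (0:ℝ)..t, ε (g s)‖ ≤ ∫ s in (0:ℝ)..t, ‖ε (g s)‖ :=
          intervalIntegral.norm_integral_le_integral_norm ht
      _ = ∫ s in (0:ℝ)..t, eucNorm (g s) := by
          apply intervalIntegral.integral_congr
          intro s _; exact (hε (g s)).symm
  have heucNormcont : ContinuousOn (fun s => eucNorm (g s)) (Set.uIcc 0 t) := by
    have := (ε.continuous.comp_continuousOn hgcont).norm
    convert this using 1
    funext s; exact hε (g s)
  have hint2 : (∫ s in (0:ℝ)..t, eucNorm (g s))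
      ≤ ∫ s in (0:ℝ)..t, c * L * Real.exp (-r * k * t) * Real.exp ((r - α) * k * s) := by
    have hφ : Continuous fun s : ℝ => c * L * Real.exp (-r * k * t) * Real.exp ((r - α) * k * s) :=
      continuous_const.mul (Real.continuous_exp.comp (continuous_const.mul continuous_id))
    exact intervalIntegral.integral_mono_on ht heucNormcont.intervalIntegrable
      (hφ.intervalIntegrable 0 t) hpt
  have hval : (∫ s in (0:ℝ)..t, c * L * Real.exp (-r * k * t) * Real.exp ((r - α) * k * s))
      = c * L / ((r - α) * k) * (Real.exp (-α * k * t) - Real.exp (-r * k * t)) := by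
    rw [intervalIntegral.integral_const_mul, exp_int_aux _ _ (ne_of_gt hβ)]
    have hE : Real.exp (-r * k * t) * Real.exp ((r - α) * k * t) = Real.exp (-α * k * t) := by
      rw [← Real.exp_add]; congr 1; ring
    calc c * L * Real.exp (-r * k * t) * ((Real.exp ((r - α) * k * t) - 1) / ((r - α) * k))
        = c * L / ((r - α) * k)
          * (Real.exp (-r * k * t) * Real.exp ((r - α) * k * t) - Real.exp (-r * k * t)) := by
          ring
      _ = c * L / ((r - α) * k) * (Real.exp (-α * k * t) - Real.exp (-r * k * t)) := by rw [hE]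
  -- first bound
  have hfirst : eucNorm (e t) ≤ c * Real.exp (-r * k * t) * eucNorm e₀
      + c * L / ((r - α) * k) * (Real.exp (-α * k * t) - Real.exp (-r * k * t)) := by
    rw [he t ht]
    calc eucNorm (_ + _) ≤ eucNorm ((NormedSpace.exp (t • A)).mulVec e₀)
          + eucNorm (∫ s in (0:ℝ)..t, g s) := eucNorm_add_le _ _
      _ ≤ c * Real.exp (-r * k * t) * eucNorm e₀
          + (∫ s in (0:ℝ)..t, c * L * Real.exp (-r * k * t) * Real.exp ((r - α) * k * s)) :=
          add_le_add (hA t ht e₀) (hint1.trans hint2)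
      _ = _ := by rw [hval]
  refine ⟨hfirst, hfirst.trans ?_⟩
  -- second bound from the first
  have hee : Real.exp (-r * k * t) ≤ Real.exp (-α * k * t) := by
    apply Real.exp_le_exp.2; nlinarith
  have hEr : (0:ℝ) < Real.exp (-r * k * t) := Real.exp_pos _
  have hD : (0:ℝ) ≤ c * L / ((r - α) * k) := by positivity
  have hn0 : 0 ≤ eucNorm e₀ := eucNorm_nonneg' e₀
  nlinarith [mul_le_mul_of_nonneg_left hee (mul_nonneg hc.le hn0)]
end
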